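/- arXiv:2509.15052 — 2 statements merged into one kernel-verified Lean document; each statement's English description precedes it below -/
import Mathlib

section
/- (Completeness of the reduction.) Let l be a labeling of the label cover instance and let S ⊆ E be a set of edges satisfied by l. Define the coalition assignment C that assigns 1 robot to every source task w ∈ U ∪ V, 1 robot to every labeled task of the form (w, l(w)), 2 robots to every edge task ((u,v),(l(u),l(v))) with (u,v) ∈ S, and 0 robots to all other tasks. Then the total reward of C equals 4εn + |S|. In particular, if l satisfies all m edges, the total reward equals 4εn + m. -/
namespace MRTA

/-- Tasks of the reduced MRTA instance: a source task per vertex `w : U ⊕ V`,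
a labeled task per vertex-label pair, and an edge task per edge and label pair. -/
inductive Task (U V Λ : Type) where
  | src : U ⊕ V → Task U V Λ
  | lab : U ⊕ V → Λ → Task U V Λ
  | edg : U → V → Λ → Λ → Task U V Λ
  deriving DecidableEq

variable {U V Λ : Type} [Fintype U] [Fintype V] [Fintype Λ]
  [DecidableEq U] [DecidableEq V] [DecidableEq Λ]

/-- Reward of a source task `w`: `ε` if exactly one robot executes it, else `0`. -/
noncomputable def srcReward (ε : ℝ) (C : Task U V Λ → ℕ) (w : U ⊕ V) : ℝ :=
  if C (.src w) = 1 then ε else 0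

/-- Reward of a labeled task `(w, l)`: `ε` if exactly one robot executes it and the
corresponding source task earned positive reward, else `0`. -/
noncomputable def labReward (ε : ℝ) (C : Task U V Λ → ℕ) (w : U ⊕ V) (l : Λ) : ℝ :=
  if C (.lab w l) = 1 ∧ 0 < srcReward ε C w then ε else 0

/-- Reward of an edge task `((u,v),(lu,lv))`: `1` if exactly two robots execute it and both
corresponding labeled tasks earned positive reward, else `0`. -/
noncomputable def edgReward (ε : ℝ) (C : Task U V Λ → ℕ) (u : U) (v : V) (lu lv : Λ) : ℝ :=
  if C (.edg u v lu lv) = 2 ∧ 0 < labReward ε C (Sum.inl u) lu ∧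
      0 < labReward ε C (Sum.inr v) lv then 1 else 0

/-- Reward of an arbitrary task. -/
noncomputable def reward (ε : ℝ) (C : Task U V Λ → ℕ) : Task U V Λ → ℝ
  | .src w => srcReward ε C w
  | .lab w l => labReward ε C w l
  | .edg u v lu lv => edgReward ε C u v lu lv

/-- The source tasks of the instance. -/
def srcTasks : Finset (Task U V Λ) := Finset.univ.image Task.src

/-- The labeled tasks of the instance: one for each vertex `w` and label `l ∈ L w`. -/
def labTasks (L : U ⊕ V → Finset Λ) : Finset (Task U V Λ) :=
  Finset.univ.biUnion fun w => (L w).image (Task.lab w)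

/-- The edge tasks of the instance: one for each edge `e ∈ E` and pair `p ∈ R e`. -/
def edgTasks (E : Finset (U × V)) (R : U × V → Finset (Λ × Λ)) : Finset (Task U V Λ) :=
  E.biUnion fun e => (R e).image fun p => Task.edg e.1 e.2 p.1 p.2

/-- All tasks of the reduced MRTA instance. -/
def allTasks (L : U ⊕ V → Finset Λ) (E : Finset (U × V)) (R : U × V → Finset (Λ × Λ)) :
    Finset (Task U V Λ) :=
  srcTasks ∪ labTasks L ∪ edgTasks E R

/-- The total reward of a coalition assignment `C`: the sum of rewards over all tasks. -/
noncomputable def totalReward (L : U ⊕ V → Finset Λ) (E : Finset (U × V))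
    (R : U × V → Finset (Λ × Λ)) (ε : ℝ) (C : Task U V Λ → ℕ) : ℝ :=
  ∑ t ∈ allTasks L E R, reward ε C t

end MRTA

/-! Under `C` every source task and every task `(w, ℓ w)` earns `ε`, and
an edge task earns `1` exactly when it is the task `((u,v),(ℓ u, ℓ v))` of an edge of `S`;
since `ℓ w ∈ L w` and `S` is satisfied, each of these tasks occurs exactly once in the instance. -/

namespace MRTA

variable {U V Λ : Type}

section TaskSums

variable [DecidableEq U] [DecidableEq V] [DecidableEq Λ] {M : Type} [AddCommMonoid M]
  (f : Task U V Λ → M)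

theorem sum_srcTasks [Fintype U] [Fintype V] : ∑ t ∈ srcTasks, f t = ∑ w, f (.src w) :=
  Finset.sum_image fun _ _ _ _ h => Task.src.inj h

theorem sum_labTasks [Fintype U] [Fintype V] (L : U ⊕ V → Finset Λ) :
    ∑ t ∈ labTasks L, f t = ∑ w, ∑ l ∈ L w, f (.lab w l) := by
  rw [labTasks, Finset.sum_biUnion]
  · exact Finset.sum_congr rfl fun w _ =>
      Finset.sum_image fun _ _ _ _ h => (Task.lab.inj h).2
  · intro w _ w' _ hww'
    simp only [Function.onFun, Finset.disjoint_left, Finset.mem_image]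
    rintro _ ⟨l, -, rfl⟩ ⟨l', -, h⟩
    exact hww' (Task.lab.inj h).1.symm

theorem sum_edgTasks (E : Finset (U × V)) (R : U × V → Finset (Λ × Λ)) :
    ∑ t ∈ edgTasks E R, f t = ∑ e ∈ E, ∑ p ∈ R e, f (.edg e.1 e.2 p.1 p.2) := by
  rw [edgTasks, Finset.sum_biUnion]
  · refine Finset.sum_congr rfl fun e _ => Finset.sum_image fun _ _ _ _ h => ?_
    obtain ⟨-, -, h₁, h₂⟩ := Task.edg.inj h
    exact Prod.ext h₁ h₂
  · intro e _ e' _ hee'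
    simp only [Function.onFun, Finset.disjoint_left, Finset.mem_image]
    rintro _ ⟨p, -, rfl⟩ ⟨p', -, h⟩
    obtain ⟨h₁, h₂, -, -⟩ := Task.edg.inj h
    exact hee' (Prod.ext h₁.symm h₂.symm)

theorem sum_allTasks [Fintype U] [Fintype V] (L : U ⊕ V → Finset Λ) (E : Finset (U × V))
    (R : U × V → Finset (Λ × Λ)) :
    ∑ t ∈ allTasks L E R, f t = ∑ w, f (.src w) + ∑ w, ∑ l ∈ L w, f (.lab w l) +
      ∑ e ∈ E, ∑ p ∈ R e, f (.edg e.1 e.2 p.1 p.2) := by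
  have src_lab : Disjoint (srcTasks : Finset (Task U V Λ)) (labTasks L) := by
    simp only [srcTasks, labTasks, Finset.disjoint_left, Finset.mem_image, Finset.mem_biUnion]
    rintro _ ⟨w, -, rfl⟩ ⟨w', -, l, -, h⟩
    cases h
  have src_lab_edg : Disjoint (srcTasks ∪ labTasks L) (edgTasks E R) := by
    simp only [srcTasks, labTasks, edgTasks, Finset.disjoint_left, Finset.mem_union,
      Finset.mem_image, Finset.mem_biUnion]
    rintro _ (⟨w, -, rfl⟩ | ⟨w, -, l, -, rfl⟩) ⟨e, -, p, -, h⟩ <;> cases h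
  rw [allTasks, Finset.sum_union src_lab_edg, Finset.sum_union src_lab, sum_srcTasks,
    sum_labTasks, sum_edgTasks]

end TaskSums

theorem sum_sum_ite_mem_and_eq_card {α β M : Type} [DecidableEq α] [DecidableEq β]
    [AddCommMonoidWithOne M] (E S : Finset α) (R : α → Finset β) (q : α → β) (hSE : S ⊆ E)
    (hq : ∀ e ∈ S, q e ∈ R e) :
    ∑ e ∈ E, ∑ p ∈ R e, (if e ∈ S ∧ p = q e then (1 : M) else 0) = S.card := by
  have inner (e : α) : ∑ p ∈ R e, (if e ∈ S ∧ p = q e then (1 : M) else 0) =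
      if e ∈ S then 1 else 0 := by
    by_cases he : e ∈ S
    · simp [he, Finset.sum_ite_eq', hq e he]
    · simp [he]
  simp only [inner, Finset.sum_boole, Finset.filter_mem_eq_inter, Finset.inter_eq_right.mpr hSE]

section CanonicalAssignment

variable {ε : ℝ} {ℓ : U ⊕ V → Λ} {S : Finset (U × V)} {C : Task U V Λ → ℕ}

theorem srcReward_eq (hCsrc : ∀ w, C (.src w) = 1) (w : U ⊕ V) : srcReward ε C w = ε := by
  simp [srcReward, hCsrc]

theorem labReward_eq [DecidableEq Λ] (hε : 0 < ε) (hCsrc : ∀ w, C (.src w) = 1)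
    (hClab : ∀ w l, C (.lab w l) = if l = ℓ w then 1 else 0) (w : U ⊕ V) (l : Λ) :
    labReward ε C w l = if l = ℓ w then ε else 0 := by
  by_cases h : l = ℓ w <;> simp [labReward, srcReward_eq hCsrc, hClab, hε, h]

theorem edgReward_eq [DecidableEq U] [DecidableEq V] [DecidableEq Λ] (hε : 0 < ε)
    (hCsrc : ∀ w, C (.src w) = 1)
    (hClab : ∀ w l, C (.lab w l) = if l = ℓ w then 1 else 0)
    (hCedg : ∀ u v lu lv, C (.edg u v lu lv) =
      if (u, v) ∈ S ∧ lu = ℓ (Sum.inl u) ∧ lv = ℓ (Sum.inr v) then 2 else 0)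
    (e : U × V) (p : Λ × Λ) :
    edgReward ε C e.1 e.2 p.1 p.2 =
      if e ∈ S ∧ p = (ℓ (Sum.inl e.1), ℓ (Sum.inr e.2)) then 1 else 0 := by
  by_cases h : e ∈ S ∧ p = (ℓ (Sum.inl e.1), ℓ (Sum.inr e.2))
  · obtain ⟨he, rfl⟩ := h
    simp [edgReward, labReward_eq hε hCsrc hClab, hCedg, he, hε]
  · simp only [edgReward, hCedg, Prod.ext_iff] at h ⊢
    simp [h]

end CanonicalAssignment

end MRTA

namespace MRTA

variable {U V Λ : Type} [Fintype U] [Fintype V] [Fintype Λ]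
  [DecidableEq U] [DecidableEq V] [DecidableEq Λ]

/-- **Completeness of the reduction.** Let `ℓ` be a labeling of the label cover
instance and `S ⊆ E` a set of edges satisfied by `ℓ`. The coalition assignment `C` that assigns
one robot to every source task, one robot to every labeled task `(w, ℓ w)`, two robots to every
edge task `((u,v),(ℓ u, ℓ v))` with `(u,v) ∈ S`, and zero robots to all other tasks, has total
reward exactly `4 ε n + |S|`. -/
theorem completeness (ε : ℝ) (hε : 0 < ε)
    (L : U ⊕ V → Finset Λ) (E : Finset (U × V)) (R : U × V → Finset (Λ × Λ))
    (n : ℕ) (hU : Fintype.card U = n) (hV : Fintype.card V = n)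
    (ℓ : U ⊕ V → Λ) (hℓ : ∀ w, ℓ w ∈ L w)
    (S : Finset (U × V)) (hSE : S ⊆ E)
    (hsat : ∀ e ∈ S, (ℓ (Sum.inl e.1), ℓ (Sum.inr e.2)) ∈ R e)
    (C : Task U V Λ → ℕ)
    (hCsrc : ∀ w, C (.src w) = 1)
    (hClab : ∀ w l, C (.lab w l) = if l = ℓ w then 1 else 0)
    (hCedg : ∀ u v lu lv, C (.edg u v lu lv) =
      if (u, v) ∈ S ∧ lu = ℓ (Sum.inl u) ∧ lv = ℓ (Sum.inr v) then 2 else 0) :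
    totalReward L E R ε C = 4 * ε * (n : ℝ) + (S.card : ℝ) := by
  have labels (w : U ⊕ V) : ∑ l ∈ L w, (if l = ℓ w then ε else 0) = ε := by
    rw [Finset.sum_ite_eq', if_pos (hℓ w)]
  rw [totalReward, sum_allTasks]
  simp only [reward, srcReward_eq hCsrc, labReward_eq hε hCsrc hClab,
    edgReward_eq hε hCsrc hClab hCedg, labels,
    sum_sum_ite_mem_and_eq_card E S R _ hSE hsat, Finset.sum_const, Finset.card_univ,
    Fintype.card_sum, hU, hV, nsmul_eq_mul]
  push_cast
  ring

end MRTA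
end

section
/- (Executed edge tasks correspond to satisfied edges.) Let C be a coalition assignment in the reduced MRTA instance such that for every vertex w ∈ U ∪ V at most one labeled task of the form (w,l) satisfies C((w,l)) = 1. Then there exists a single labeling l* of the label cover instance such that every edge (u,v) ∈ E for which some edge task ((u,v),(l_u,l_v)) earns reward 1 under C is satisfied by l*. Consequently, the number of distinct edges of E possessing an edge task that earns reward 1 under C is at most the maximum number of edges simultaneously satisfiable by any labeling of the instance. -/
/-! An edge task earns reward `1` only if both of its labeled tasks are executed by a
single robot. Since each vertex has at most one such label, labeling every vertex by it (and
arbitrarily otherwise) satisfies every edge with a rewarded edge task. -/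

theorem Finset.exists_forall_mem_and_eq_of_unique {W Λ : Type} (L : W → Finset Λ)
    (hL : ∀ w, (L w).Nonempty) (P : W → Λ → Prop)
    (huniq : ∀ w, ∀ l₁ ∈ L w, ∀ l₂ ∈ L w, P w l₁ → P w l₂ → l₁ = l₂) :
    ∃ ℓ : W → Λ, (∀ w, ℓ w ∈ L w) ∧ ∀ w, ∀ l ∈ L w, P w l → ℓ w = l := by
  have hchoice : ∀ w, ∃ l ∈ L w, ∀ l' ∈ L w, P w l' → l = l' := by
    intro w
    by_cases hP : ∃ l ∈ L w, P w l
    · obtain ⟨l, hl, hPl⟩ := hP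
      exact ⟨l, hl, fun l' hl' hPl' => huniq w l hl l' hl' hPl hPl'⟩
    · push Not at hP
      obtain ⟨l, hl⟩ := hL w
      exact ⟨l, hl, fun l' hl' hPl' => absurd hPl' (hP l' hl')⟩
  choose ℓ hmem hext using hchoice
  exact ⟨ℓ, hmem, hext⟩

namespace MRTA

variable {U V Λ : Type}

theorem lab_eq_one_of_labReward_pos {ε : ℝ} {C : Task U V Λ → ℕ} {w : U ⊕ V} {l : Λ}
    (h : 0 < labReward ε C w l) : C (.lab w l) = 1 := by
  unfold labReward at h
  split_ifs at h with hC
  · exact hC.1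
  · exact absurd h (lt_irrefl 0)

theorem lab_eq_one_of_edgReward_eq_one {ε : ℝ} {C : Task U V Λ → ℕ} {u : U} {v : V}
    {lu lv : Λ} (h : edgReward ε C u v lu lv = 1) :
    C (.lab (.inl u) lu) = 1 ∧ C (.lab (.inr v) lv) = 1 := by
  unfold edgReward at h
  split_ifs at h with hC
  · exact ⟨lab_eq_one_of_labReward_pos hC.2.1, lab_eq_one_of_labReward_pos hC.2.2⟩
  · exact absurd h zero_ne_one

variable [Fintype U] [Fintype V] [Fintype Λ] [DecidableEq U] [DecidableEq V] [DecidableEq Λ]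

theorem card_filter_le_sup_card_satisfied (L : U ⊕ V → Finset Λ) (E : Finset (U × V))
    (R : U × V → Finset (Λ × Λ)) {p : U × V → Prop} [DecidablePred p] (ℓ : U ⊕ V → Λ)
    (hℓ : ∀ w, ℓ w ∈ L w) (hp : ∀ e ∈ E, p e → (ℓ (.inl e.1), ℓ (.inr e.2)) ∈ R e) :
    (E.filter p).card ≤
      ((Finset.univ : Finset (U ⊕ V → Λ)).filter fun g => ∀ w, g w ∈ L w).sup
        fun g => (E.filter fun e => (g (.inl e.1), g (.inr e.2)) ∈ R e).card := by
  have hsub : E.filter p ⊆ E.filter fun e => (ℓ (.inl e.1), ℓ (.inr e.2)) ∈ R e := by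
    intro e he
    obtain ⟨heE, hpe⟩ := Finset.mem_filter.1 he
    exact Finset.mem_filter.2 ⟨heE, hp e heE hpe⟩
  exact (Finset.card_le_card hsub).trans
    (Finset.le_sup (f := fun g => (E.filter fun e => (g (.inl e.1), g (.inr e.2)) ∈ R e).card)
      (Finset.mem_filter.2 ⟨Finset.mem_univ ℓ, hℓ⟩))

theorem executed_edge_tasks_satisfiable_general (ε : ℝ)
    (L : U ⊕ V → Finset Λ) (hLne : ∀ w, (L w).Nonempty)
    (E : Finset (U × V)) (R : U × V → Finset (Λ × Λ))
    (hR : ∀ e ∈ E, R e ⊆ (L (Sum.inl e.1)) ×ˢ (L (Sum.inr e.2)))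
    (C : Task U V Λ → ℕ)
    (huniq : ∀ w : U ⊕ V, ∀ l₁ ∈ L w, ∀ l₂ ∈ L w,
      C (.lab w l₁) = 1 → C (.lab w l₂) = 1 → l₁ = l₂) :
    ∃ ℓ : U ⊕ V → Λ, (∀ w, ℓ w ∈ L w) ∧
      (∀ e ∈ E, (∃ p ∈ R e, edgReward ε C e.1 e.2 p.1 p.2 = 1) →
        (ℓ (Sum.inl e.1), ℓ (Sum.inr e.2)) ∈ R e) ∧
      (E.filter fun e => ∃ p ∈ R e, edgReward ε C e.1 e.2 p.1 p.2 = 1).card ≤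
        ((Finset.univ : Finset (U ⊕ V → Λ)).filter fun g => ∀ w, g w ∈ L w).sup
          fun g => (E.filter fun e => (g (Sum.inl e.1), g (Sum.inr e.2)) ∈ R e).card := by
  obtain ⟨ℓ, hmem, hext⟩ :=
    Finset.exists_forall_mem_and_eq_of_unique L hLne (fun w l => C (.lab w l) = 1) huniq
  have hsat : ∀ e ∈ E, (∃ p ∈ R e, edgReward ε C e.1 e.2 p.1 p.2 = 1) →
      (ℓ (Sum.inl e.1), ℓ (Sum.inr e.2)) ∈ R e := by
    rintro e he ⟨p, hpR, hp⟩
    obtain ⟨hu, hv⟩ := Finset.mem_product.1 (hR e he hpR)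
    obtain ⟨hCu, hCv⟩ := lab_eq_one_of_edgReward_eq_one hp
    rwa [hext _ _ hu hCu, hext _ _ hv hCv]
  exact ⟨ℓ, hmem, hsat, card_filter_le_sup_card_satisfied L E R ℓ hmem hsat⟩

/-- **Executed edge tasks correspond to satisfied edges.** If for every vertex
`w` at most one labeled task `(w,l)` (with `l ∈ L w`) is assigned exactly one robot, then
there is a single labeling `ℓ` of the label cover instance such that every edge possessing an
edge task earning reward `1` under `C` is satisfied by `ℓ`; consequently, the number of
distinct edges possessing an edge task that earns reward `1` under `C` is at most the maximum
number of edges simultaneously satisfiable by any labeling of the instance. -/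
theorem executed_edge_tasks_satisfiable (ε : ℝ) (hε : 0 < ε)
    (L : U ⊕ V → Finset Λ) (hLne : ∀ w, (L w).Nonempty)
    (E : Finset (U × V)) (R : U × V → Finset (Λ × Λ))
    (hR : ∀ e ∈ E, R e ⊆ (L (Sum.inl e.1)) ×ˢ (L (Sum.inr e.2)))
    (C : Task U V Λ → ℕ)
    (huniq : ∀ w : U ⊕ V, ∀ l₁ ∈ L w, ∀ l₂ ∈ L w,
      C (.lab w l₁) = 1 → C (.lab w l₂) = 1 → l₁ = l₂) :
    ∃ ℓ : U ⊕ V → Λ, (∀ w, ℓ w ∈ L w) ∧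
      (∀ e ∈ E, (∃ p ∈ R e, edgReward ε C e.1 e.2 p.1 p.2 = 1) →
        (ℓ (Sum.inl e.1), ℓ (Sum.inr e.2)) ∈ R e) ∧
      (E.filter fun e => ∃ p ∈ R e, edgReward ε C e.1 e.2 p.1 p.2 = 1).card ≤
        ((Finset.univ : Finset (U ⊕ V → Λ)).filter fun g => ∀ w, g w ∈ L w).sup
          fun g => (E.filter fun e => (g (Sum.inl e.1), g (Sum.inr e.2)) ∈ R e).card :=
  executed_edge_tasks_satisfiable_general ε L hLne E R hR C huniq

end MRTA
end
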